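/- arXiv:2003.04827 — 2 statements merged into one kernel-verified Lean document; each statement's English description precedes it below -/
import Mathlib

section
/- For a functor P from the category of finite sets to itself, the following are equivalent: (1) P is isomorphic to a finite coproduct of corepresentable functors Fin(kᵢ, –) (i.e. P is a polynomial functor); (2) P preserves wide pullbacks, i.e. limits over every (finite) wide-pullback shape. -/
/- STATEMENT 0: For a functor `P : FintypeCat ⥤ FintypeCat`, the following are equivalent:
(1) `P` is isomorphic to a finite coproduct of corepresentable functors `Fin(kᵢ, –)`
    (i.e. `P` is a polynomial functor);
(2) `P` preserves wide pullbacks, i.e. limits over every (finite) wide-pullback shape. -/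

open CategoryTheory CategoryTheory.Limits Opposite

noncomputable section

noncomputable instance (X Y : FintypeCat.{0}) : Fintype (X ⟶ Y) := by
  classical
  letI := @FintypeCat.fintype X; letI := @FintypeCat.fintype Y
  exact Fintype.ofInjective (fun f : X ⟶ Y => (f : X → Y))
    (fun f g h => FintypeCat.hom_ext _ _ (congrFun h))

/-- The finite coproduct `∐ᵢ Fin(kᵢ, –)` of corepresentable functors `FintypeCat ⥤ FintypeCat`. -/
def polySum {I : Type} [Fintype I] (k : I → FintypeCat.{0}) :
    FintypeCat.{0} ⥤ FintypeCat.{0} where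
  obj X := FintypeCat.of (Σ i, (k i ⟶ X))
  map f := FintypeCat.homMk (fun x => ⟨x.1, x.2 ≫ f⟩)

/-- A polynomial functor is a finite coproduct of corepresentables. -/
def IsPolynomial (P : FintypeCat.{0} ⥤ FintypeCat.{0}) : Prop :=
  ∃ (I : Type) (_ : Fintype I) (k : I → FintypeCat.{0}), Nonempty (P ≅ polySum k)

/-!
A functor `P` preserving finite wide pullbacks sends elementwise wide pullbacks of finite sets to
elementwise wide pullbacks. Fix `i ∈ P pt` and call `s ∈ P S` over `i` generic if every
`b ∈ P Bool` over `i` is `P χ s` for some `χ : S → Bool`. Such elements exist: since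
`P (B → Bool)` is a fibre power of `P Bool`, the tuple of all `b` over `i` is one. A generic
element `s` of least cardinality represents the fibre of `P` over `i`. Indeed an injection
`T ↪ S` whose image under `P` hits `s` is onto, because `T` then carries a generic element too.
Applied to the equalizer of `g₁, g₂ : S → Y`, this makes `g ↦ P g s` injective; applied to the
pullback of `δ : Y ↪ (Y → Bool)` along the map `S → (Y → Bool)` assembled from the coordinates
of `P δ y`, it makes it surjective. Conversely a sum of corepresentables preserves wide pullbacks
since these are connected limits.
-/

namespace FintypeCat

open Function

section WidePullbacks

variable {J : Type} {B : FintypeCat.{0}} {X : J → FintypeCat.{0}}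

def IsWidePullback (f : ∀ j, X j ⟶ B) {W : FintypeCat.{0}} (π₀ : W ⟶ B)
    (π : ∀ j, W ⟶ X j) : Prop :=
  (∀ j w, f j (π j w) = π₀ w) ∧
    ∀ (b : B) (x : ∀ j, X j), (∀ j, f j (x j) = b) → ∃! w : W, π₀ w = b ∧ ∀ j, π j w = x j

lemma isLimit_iff_isWidePullback [Finite J] {D : WidePullbackShape J ⥤ FintypeCat.{0}}
    (c : Cone D) :
    Nonempty (IsLimit c) ↔ IsWidePullback (fun j => D.map (WidePullbackShape.Hom.term j))
      (c.π.app none) (fun j => c.π.app (some j)) := by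
  have := Fintype.ofFinite J
  have hincl : Nonempty (IsLimit c) ↔ Nonempty (IsLimit (incl.mapCone c)) :=
    ⟨fun ⟨h⟩ => ⟨isLimitOfPreserves incl h⟩, fun ⟨h⟩ => ⟨isLimitOfReflects incl h⟩⟩
  rw [hincl, Types.isLimit_iff]
  refine ⟨fun h => ⟨fun j w => ConcreteCategory.congr_hom (c.w (.term j)) w, fun b x hx => ?_⟩,
    fun ⟨_, h⟩ s hs => ?_⟩
  · let s : ∀ j, (D ⋙ incl).obj j := fun j => Option.casesOn j b x
    have hs : s ∈ (D ⋙ incl).sections := by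
      rintro (_ | j) (_ | j') (_ | _)
      exacts [by simp [WidePullbackShape.hom_id], hx j, by simp [WidePullbackShape.hom_id]]
    obtain ⟨w, hw, hu⟩ := h s hs
    exact ⟨w, Option.forall.1 hw, fun w' hw' => hu w' (Option.forall.2 hw')⟩
  · obtain ⟨w, hw, hu⟩ := h (s none) (fun j => s (some j)) (fun j => hs (.term j))
    exact ⟨w, Option.forall.2 hw, fun w' hw' => hu w' (Option.forall.1 hw')⟩

lemma IsWidePullback.map [Finite J] {f : ∀ j, X j ⟶ B} {W : FintypeCat.{0}} {π₀ : W ⟶ B}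
    {π : ∀ j, W ⟶ X j} (h : IsWidePullback f π₀ π) (P : FintypeCat.{0} ⥤ FintypeCat.{0})
    [PreservesLimitsOfShape (WidePullbackShape J) P] :
    IsWidePullback (fun j => P.map (f j)) (P.map π₀) (fun j => P.map (π j)) := by
  let c := WidePullbackShape.mkCone (F := WidePullbackShape.wideCospan B X f) π₀ π
    (fun j => hom_ext _ _ (h.1 j))
  obtain ⟨hc⟩ := (isLimit_iff_isWidePullback c).2 h
  exact (isLimit_iff_isWidePullback (P.mapCone c)).1 ⟨isLimitOfPreserves P hc⟩

lemma IsWidePullback.polySum {f : ∀ j, X j ⟶ B} {W : FintypeCat.{0}} {π₀ : W ⟶ B}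
    {π : ∀ j, W ⟶ X j} (h : IsWidePullback f π₀ π) {I : Type} [Fintype I]
    (k : I → FintypeCat.{0}) :
    IsWidePullback (fun j => (polySum k).map (f j)) ((polySum k).map π₀)
      (fun j => (polySum k).map (π j)) := by
  refine ⟨fun j ⟨i, ω⟩ => ?_, ?_⟩
  · show (⟨i, (ω ≫ π j) ≫ f j⟩ : Σ i, (k i ⟶ B)) = ⟨i, ω ≫ π₀⟩
    congr 1
    ext κ
    exact h.1 j (ω κ)
  rintro ⟨i, β⟩ x hx
  -- the shape is connected, so all components of a compatible family lie in the summand `i`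
  have hx' : ∀ j, ∃ ξ : k i ⟶ X j, x j = ⟨i, ξ⟩ ∧ ξ ≫ f j = β := by
    intro j
    have hj := hx j
    generalize x j = xj at hj ⊢
    obtain ⟨i', ξ⟩ := xj
    obtain ⟨rfl, hξ⟩ := Sigma.mk.inj_iff.1 hj
    exact ⟨ξ, rfl, eq_of_heq hξ⟩
  choose ξ hxξ hξ using hx'
  have hlift : ∀ κ, ∃! w, π₀ w = β κ ∧ ∀ j, π j w = ξ j κ := fun κ =>
    h.2 _ _ fun j => by rw [← hξ j]; rfl
  choose ω hω hωu using hlift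
  refine ⟨⟨i, homMk ω⟩, ⟨?_, fun j => ?_⟩, ?_⟩
  · show (⟨i, homMk ω ≫ π₀⟩ : Σ i, (k i ⟶ B)) = ⟨i, β⟩
    congr 1
    ext κ
    exact (hω κ).1
  · rw [hxξ j]
    show (⟨i, homMk ω ≫ π j⟩ : Σ i, (k i ⟶ X j)) = ⟨i, ξ j⟩
    congr 1
    ext κ
    exact (hω κ).2 j
  · rintro ⟨i', ω'⟩ ⟨h₀, hπ⟩
    obtain ⟨rfl, h₀⟩ := Sigma.mk.inj_iff.1 h₀
    have hπ' : ∀ j, ω' ≫ π j = ξ j := fun j => by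
      have := hπ j
      rw [hxξ j] at this
      exact eq_of_heq (Sigma.mk.inj_iff.1 this).2
    congr 1
    ext κ
    exact hωu κ (ω' κ) ⟨ConcreteCategory.congr_hom (eq_of_heq h₀) κ,
      fun j => ConcreteCategory.congr_hom (hπ' j) κ⟩

instance preservesWidePullbacks_polySum {I : Type} [Fintype I] (k : I → FintypeCat.{0})
    (J : Type) [Finite J] : PreservesLimitsOfShape (WidePullbackShape J) (polySum k) :=
  ⟨⟨fun hc => (isLimit_iff_isWidePullback _).2
    (((isLimit_iff_isWidePullback _).1 ⟨hc⟩).polySum k)⟩⟩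

abbrev pt : FintypeCat.{0} := of PUnit

def toPt (X : FintypeCat.{0}) : X ⟶ pt := homMk fun _ => PUnit.unit

lemma comp_toPt {X Y : FintypeCat.{0}} (f : X ⟶ Y) : f ≫ toPt Y = toPt X := rfl

abbrev pow (J : Type) [Finite J] (X : FintypeCat.{0}) : FintypeCat.{0} := of (J → X)

def eval {J : Type} [Finite J] {X : FintypeCat.{0}} (j : J) : pow J X ⟶ X := homMk fun v => v j

lemma isWidePullback_pow (J : Type) [Finite J] (X : FintypeCat.{0}) :
    IsWidePullback (fun _ : J => toPt X) (toPt (pow J X)) eval :=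
  ⟨fun _ _ => rfl, fun _ x _ => ⟨x, ⟨rfl, fun _ => rfl⟩, fun _ hv => funext hv.2⟩⟩

abbrev pullbackObj {X Y Z : FintypeCat.{0}} (f : X ⟶ Z) (g : Y ⟶ Z) : FintypeCat.{0} :=
  of {p : X × Y // f p.1 = g p.2}

lemma isWidePullback_pullback {X Y Z : FintypeCat.{0}} (f : X ⟶ Z) (g : Y ⟶ Z) :
    IsWidePullback (X := fun b => cond b X Y) (fun | true => f | false => g)
      (homMk fun p : pullbackObj f g => f p.1.1)
      (fun | true => homMk fun p : pullbackObj f g => p.1.1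
           | false => homMk fun p : pullbackObj f g => p.1.2) := by
  refine ⟨Bool.forall_bool.2 ⟨fun p => p.2.symm, fun _ => rfl⟩, fun z x hx => ?_⟩
  refine ⟨⟨(x true, x false), (hx true).trans (hx false).symm⟩,
    ⟨hx true, Bool.forall_bool.2 ⟨rfl, rfl⟩⟩, fun p hp => ?_⟩
  exact Subtype.ext (Prod.ext (hp.2 true) (hp.2 false))

end WidePullbacks

section GenericElements

variable (P : FintypeCat.{0} ⥤ FintypeCat.{0})

lemma map_toPt_map {X Y : FintypeCat.{0}} (f : X ⟶ Y) (x : P.obj X) :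
    P.map (toPt Y) (P.map f x) = P.map (toPt X) x := by
  rw [← comp_apply, ← P.map_comp, comp_toPt]

def IsGeneric {S : FintypeCat.{0}} (s : P.obj S) : Prop :=
  ∀ b : P.obj (of Bool), P.map (toPt _) b = P.map (toPt S) s → ∃ χ : S ⟶ of Bool, P.map χ s = b

def IsMinimalGeneric {S : FintypeCat.{0}} (s : P.obj S) : Prop :=
  IsGeneric P s ∧ ∀ (T : FintypeCat.{0}) (t : P.obj T),
    P.map (toPt T) t = P.map (toPt S) s → IsGeneric P t → Nat.card S ≤ Nat.card T

variable {P}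

lemma IsGeneric.of_map {S T : FintypeCat.{0}} {f : T ⟶ S} {t : P.obj T}
    (h : IsGeneric P (P.map f t)) : IsGeneric P t := by
  intro b hb
  obtain ⟨χ, hχ⟩ := h b (hb.trans (map_toPt_map P f t).symm)
  exact ⟨f ≫ χ, by rw [P.map_comp, comp_apply, hχ]⟩

lemma IsMinimalGeneric.bijective {S T : FintypeCat.{0}} {s : P.obj S} (hs : IsMinimalGeneric P s)
    {f : T ⟶ S} (hf : Injective f) {t : P.obj T} (ht : P.map f t = s) : Bijective f := by
  subst ht
  exact hf.bijective_of_nat_card_le (hs.2 T t (map_toPt_map P f t).symm hs.1.of_map)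

variable (hP : ∀ (J : Type) [Finite J], PreservesLimitsOfShape (WidePullbackShape J) P)
include hP

lemma map_pow_ext {J : Type} [Finite J] {X : FintypeCat.{0}} {u v : P.obj (pow J X)}
    (h₀ : P.map (toPt _) u = P.map (toPt _) v) (h : ∀ j, P.map (eval j) u = P.map (eval j) v) :
    u = v :=
  (((isWidePullback_pow J X).map P).2 _ _ fun j => map_toPt_map P (eval j) v).unique
    ⟨h₀, h⟩ ⟨rfl, fun _ => rfl⟩

lemma exists_isGeneric (i : P.obj pt) :
    ∃ (S : FintypeCat.{0}) (s : P.obj S), P.map (toPt S) s = i ∧ IsGeneric P s := by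
  let B := {b : P.obj (of Bool) // P.map (toPt _) b = i}
  obtain ⟨s, ⟨hs, hsb⟩, -⟩ :=
    ((isWidePullback_pow B (of Bool)).map P).2 i (fun b => b.1) (fun b => b.2)
  exact ⟨_, s, hs, fun b hb => ⟨eval ⟨b, hb.trans hs⟩, hsb _⟩⟩

lemma exists_isMinimalGeneric (i : P.obj pt) :
    ∃ (S : FintypeCat.{0}) (s : P.obj S), P.map (toPt S) s = i ∧ IsMinimalGeneric P s := by
  classical
  have h : ∃ n, ∃ (S : FintypeCat.{0}) (s : P.obj S),
      P.map (toPt S) s = i ∧ IsGeneric P s ∧ Nat.card S = n :=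
    let ⟨S, s, hi, hs⟩ := exists_isGeneric hP i
    ⟨_, S, s, hi, hs, rfl⟩
  obtain ⟨S, s, hi, hs, hcard⟩ := Nat.find_spec h
  exact ⟨S, s, hi, hs, fun T t ht htg => hcard ▸ Nat.find_min' h ⟨T, t, ht.trans hi, htg, rfl⟩⟩

variable {S : FintypeCat.{0}} {s : P.obj S}

lemma IsMinimalGeneric.exists_lift (hs : IsMinimalGeneric P s) {Y Z : FintypeCat.{0}}
    {m : Y ⟶ Z} (hm : Injective m) (χ : S ⟶ Z) {y : P.obj Y} (hy : P.map m y = P.map χ s) :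
    ∃ g : S ⟶ Y, g ≫ m = χ ∧ P.map g s = y := by
  obtain ⟨w, ⟨-, hw⟩, -⟩ := ((isWidePullback_pullback χ m).map P).2 (P.map χ s)
    (fun | true => s | false => y) (Bool.forall_bool.2 ⟨hy, rfl⟩)
  let fst : pullbackObj χ m ⟶ S := homMk fun p => p.1.1
  have hws : P.map fst w = s := hw true
  have hwy : P.map (homMk fun p : pullbackObj χ m => p.1.2) w = y := hw false
  have hfst : Injective fst := fun p q (hpq : p.1.1 = q.1.1) =>
    Subtype.ext (Prod.ext hpq (hm (p.2.symm.trans ((congrArg χ hpq).trans q.2))))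
  let e := Equiv.ofBijective _ (hs.bijective hfst hws)
  refine ⟨homMk fun a => (e.symm a).1.2, hom_ext _ _ fun a => ?_, ?_⟩
  · exact (e.symm a).2.symm.trans (congrArg χ (e.apply_symm_apply a))
  · rw [← hws, ← comp_apply, ← P.map_comp, ← hwy]
    exact congrArg (fun f => P.map f w)
      (hom_ext _ _ fun p => congrArg (fun q => q.1.2) (e.symm_apply_apply p))

lemma IsMinimalGeneric.map_injective (hs : IsMinimalGeneric P s) {Y : FintypeCat.{0}} :
    Injective fun g : S ⟶ Y => P.map g s := by
  intro g₁ g₂ h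
  let diag : Y ⟶ pow Bool Y := homMk fun y _ => y
  let χ : S ⟶ pow Bool Y := homMk fun a b => cond b (g₁ a) (g₂ a)
  -- the equalizer of `g₁` and `g₂` is the pullback of `diag` along `χ`
  have hχ : P.map diag (P.map g₁ s) = P.map χ s := by
    refine map_pow_ext hP (by simp only [map_toPt_map]) fun b => ?_
    rw [← comp_apply, ← P.map_comp, ← comp_apply, ← P.map_comp, ← comp_apply, ← P.map_comp]
    cases b
    · exact h
    · rfl
  obtain ⟨g, hg, -⟩ := hs.exists_lift hP (m := diag) (fun y y' h => congrFun h true) χ hχ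
  exact hom_ext _ _ fun a =>
    (congrFun (ConcreteCategory.congr_hom hg a) true).symm.trans
      (congrFun (ConcreteCategory.congr_hom hg a) false)

lemma IsMinimalGeneric.exists_map_eq (hs : IsMinimalGeneric P s) {Y : FintypeCat.{0}}
    (y : P.obj Y) (hy : P.map (toPt Y) y = P.map (toPt S) s) : ∃ g : S ⟶ Y, P.map g s = y := by
  classical
  let δ : Y ⟶ pow Y (of Bool) := homMk fun y z => decide (z = y)
  have hδ : Injective δ := fun y y' h => by
    have : decide (y = y) = decide (y = y') := congrFun h y
    simpa using this
  choose χ hχ using fun z : Y =>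
    hs.1 (P.map (eval z) (P.map δ y)) (by simp only [map_toPt_map, hy])
  obtain ⟨g, -, hg⟩ := hs.exists_lift hP hδ (y := y) (homMk fun a z => χ z a) <|
    map_pow_ext hP (by simp only [map_toPt_map, hy]) fun z => by
      rw [← hχ z, ← comp_apply, ← P.map_comp]
      rfl
  exact ⟨g, hg⟩

lemma bijective_sigma_map_of_isMinimalGeneric {S : P.obj pt → FintypeCat.{0}}
    {s : ∀ i, P.obj (S i)} (hsi : ∀ i, P.map (toPt _) (s i) = i)
    (hs : ∀ i, IsMinimalGeneric P (s i)) (Y : FintypeCat.{0}) :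
    Bijective fun g : Σ i, (S i ⟶ Y) => P.map g.2 (s g.1) := by
  refine ⟨fun ⟨i, g⟩ ⟨i', g'⟩ h => ?_, fun y => ?_⟩
  · obtain rfl : i = i' := by
      simpa only [map_toPt_map, hsi] using congrArg (P.map (toPt Y)) h
    obtain rfl := (hs i).map_injective hP h
    rfl
  · obtain ⟨g, hg⟩ := (hs _).exists_map_eq hP y (hsi _).symm
    exact ⟨⟨_, g⟩, hg⟩

def isoPolySumOfIsMinimalGeneric [Fintype (P.obj pt)] {S : P.obj pt → FintypeCat.{0}}
    {s : ∀ i, P.obj (S i)} (hsi : ∀ i, P.map (toPt _) (s i) = i)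
    (hs : ∀ i, IsMinimalGeneric P (s i)) : polySum S ≅ P :=
  NatIso.ofComponents
    (fun Y => equivEquivIso
      (Equiv.ofBijective _ (bijective_sigma_map_of_isMinimalGeneric hP hsi hs Y)))
    (fun f => by
      ext ⟨i, g⟩
      show P.map (g ≫ f) (s i) = P.map f (P.map g (s i))
      rw [P.map_comp, comp_apply])

end GenericElements

end FintypeCat

theorem polynomial_iff_preserves_widePullbacks (P : FintypeCat.{0} ⥤ FintypeCat.{0}) :
    IsPolynomial P ↔
      ∀ (J : Type) [Finite J], PreservesLimitsOfShape (WidePullbackShape J) P := by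
  refine ⟨fun ⟨I, _, k, ⟨e⟩⟩ J _ => preservesLimitsOfShape_of_natIso e.symm, fun hP => ?_⟩
  choose S s hsi hs using FintypeCat.exists_isMinimalGeneric hP
  let := Fintype.ofFinite (P.obj FintypeCat.pt)
  exact ⟨_, inferInstance, S, ⟨(FintypeCat.isoPolySumOfIsMinimalGeneric hP hsi hs).symm⟩⟩
end
end

section
/- Let D : FintypeCatᵒᵖ ⥤ FintypeCat be any functor that sends wide pushout colimit cocones in FintypeCat to limit cones, and write π_D := D(0!) : D(1) → D(0). Then for every finite set X there is a bijection, natural in X, between D(X) and the set of pairs (i, a) where i ∈ D(0) and a : X → D(1) is a function with π_D(a(x)) = i for all x ∈ X. -/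
/- STATEMENT 14: Let `D : FintypeCatᵒᵖ ⥤ FintypeCat` be any functor that sends wide pushout
colimit cocones in `FintypeCat` to limit cones, and write `π_D := D(0!) : D(1) → D(0)`. Then
for every finite set `X` there is a bijection, natural in `X`, between `D(X)` and the set of
pairs `(i, a)` where `i ∈ D(0)` and `a : X → D(1)` satisfies `π_D(a(x)) = i` for all `x ∈ X`. -/

open CategoryTheory CategoryTheory.Limits Opposite

noncomputable section

/-- The empty finite set `0`. -/
abbrev X0 : FintypeCat.{0} := FintypeCat.of PEmpty

/-- A one-element finite set `1`. -/
abbrev X1 : FintypeCat.{0} := FintypeCat.of PUnit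

/-- The unique function `0! : 0 → 1`. -/
def zeroToOne : X0 ⟶ X1 := FintypeCat.homMk (fun x : PEmpty => x.elim)

/-! Every finite set `X` is the wide pushout of `X` copies of `0 ⟶ 1` (one for each point)
under `0`. `D` turns this colimit into a limit in `FintypeCat`, where finite limits are computed
as in types, so `D(X)` is the set of sections of the resulting wide cospan: a point of `D(0)`
together with an `X`-indexed family in `D(1)` lying over it. Naturality holds because the
cocone legs of `Y` pulled back along `g : X ⟶ Y` are the cocone legs of `X`. -/

universe u w

namespace CategoryTheory.Limits

def FintypeCat.isLimitEquivSections {J : Type} [SmallCategory J] [FinCategory J]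
    {F : J ⥤ FintypeCat.{u}} {c : Cone F} (hc : IsLimit c) :
    c.pt ≃ (F ⋙ FintypeCat.incl).sections :=
  Types.isLimitEquivSections (isLimitOfPreserves FintypeCat.incl hc)

def WidePushoutShape.sectionsEquiv {J : Type u} (G : (WidePushoutShape J)ᵒᵖ ⥤ Type w) :
    G.sections ≃ Σ i : G.obj (op none),
      {a : ∀ j, G.obj (op (some j)) //
        ∀ j, G.map (Quiver.Hom.op (WidePushoutShape.Hom.init j)) (a j) = i} where
  toFun s := ⟨s.1 (op none), fun j => s.1 (op (some j)), fun j => s.2 _⟩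
  invFun p := ⟨fun | op none => p.1 | op (some j) => p.2.1 j, by
    rintro ⟨_ | j⟩ ⟨_ | j'⟩ ⟨f⟩ <;> change WidePushoutShape.Hom _ _ at f <;> cases f
    all_goals first | exact p.2.2 _ | exact G.map_id_apply _ _⟩
  left_inv s := by
    ext ⟨_ | j⟩ <;> rfl
  right_inv p := rfl

end CategoryTheory.Limits

namespace FintypeCat

def fromEmpty (X : FintypeCat.{0}) : X0 ⟶ X := homMk PEmpty.elim

def pointOf (X : FintypeCat.{0}) (x : X) : X1 ⟶ X := homMk fun _ => x

lemma fromEmpty_comp {X Y : FintypeCat.{0}} (g : X ⟶ Y) : fromEmpty X ≫ g = fromEmpty Y :=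
  hom_ext _ _ fun e => e.elim

lemma pointOf_comp {X Y : FintypeCat.{0}} (g : X ⟶ Y) (x : X) :
    pointOf X x ≫ g = pointOf Y (g x) :=
  rfl

def pointsCocone (X : FintypeCat.{0}) :
    Cocone (WidePushoutShape.wideSpan X0 (fun _ : X => X1) fun _ => zeroToOne) :=
  WidePushoutShape.mkCocone (fromEmpty X) (pointOf X) fun _ => fromEmpty_comp _

def isColimitPointsCocone (X : FintypeCat.{0}) : IsColimit (pointsCocone X) where
  desc s := homMk fun x => s.ι.app (some x) PUnit.unit
  fac s j := by
    cases j with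
    | none => exact hom_ext _ _ fun e => e.elim
    | some x => exact hom_ext _ _ fun _ => rfl
  uniq s m hm := hom_ext _ _ fun x => ConcreteCategory.congr_hom (hm (some x)) PUnit.unit

end FintypeCat

open FintypeCat in
theorem widePushout_preserving_is_bundle_of_fibers
    (D : FintypeCat.{0}ᵒᵖ ⥤ FintypeCat.{0})
    (hD : ∀ (J : Type) [Finite J] (F : WidePushoutShape J ⥤ FintypeCat.{0}) (c : Cocone F),
      IsColimit c → Nonempty (IsLimit (D.mapCone c.op))) :
    ∃ e : ∀ X : FintypeCat.{0},
        D.obj (op X) ≃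
          Σ i : D.obj (op X0),
            {a : X → D.obj (op X1) // ∀ x, D.map zeroToOne.op (a x) = i},
      -- naturality in `X`
      ∀ (X Y : FintypeCat.{0}) (g : X ⟶ Y) (b : D.obj (op Y)),
        e X (D.map g.op b) =
          ⟨(e Y b).1, ⟨fun x => (e Y b).2.1 (g x), fun x => (e Y b).2.2 (g x)⟩⟩ := by
  let e (X : FintypeCat.{0}) :=
    have := Fintype.ofFinite X
    (FintypeCat.isLimitEquivSections (hD X _ _ (isColimitPointsCocone X)).some).trans
      (WidePushoutShape.sectionsEquiv _)
  refine ⟨e, fun X Y g b => Sigma.subtype_ext ?_ (funext fun x => ?_)⟩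
  · change D.map (fromEmpty X).op (D.map g.op b) = D.map (fromEmpty Y).op b
    rw [← Functor.map_comp_apply, ← op_comp, fromEmpty_comp]
  · change D.map (pointOf X x).op (D.map g.op b) = D.map (pointOf Y (g x)).op b
    rw [← Functor.map_comp_apply, ← op_comp, pointOf_comp]
end
end
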